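/- Let 0<β<1. Define u:ℝ→ℝ by u(x) = x^{2+β} + x for x ≥ 0 and u(x) = x for x < 0 (so u is a strictly increasing bijection of ℝ onto itself with inverse u^{-1}), and define f:ℝ→ℝ by f(t) = (2+β)(1+β)·(u^{-1}(t))^β for t ≥ 0 and f(t) = 0 for t < 0. Then: (1) u is twice differentiable on ℝ and u''(x) = f(u(x)) for every x ∈ ℝ; (2) for every M > 0, f restricted to [-M,M] is Hölder continuous of exponent β, with |f(p)-f(q)| ≤ (2+β)(1+β)|p-q|^β for all p,q ∈ [-M,M]; (3) for every ε>0 and δ>0, u restricted to [-δ,δ] does not belong to C^{2+β+ε}([-δ,δ]). -/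

import Mathlib

/-!
Writing `x₊ = max x 0`, the function is `u x = x₊ ^ (2 + β) + x`, so
`u'' x = (2 + β)(1 + β) x₊ ^ β`, which is `f (u x)` because `u` preserves signs. Since `u` expands
distances (`u' ≥ 1`), its inverse `v` is `1`-Lipschitz, and `f t = (2 + β)(1 + β) v (t₊) ^ β` is
`β`-Hölder by the subadditivity of `t ↦ t ^ β`. Finally, for a `C^(2 + β + ε)` function the second
derivative is `O(|x| ^ min (β + ε) 1)` at `0` (by the Hölder bound if `β + ε < 1`, by
differentiability otherwise), whereas `u''` grows exactly like `x ^ β` on the right of `0`.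
-/

open MeasureTheory Filter Set

/-- The normalizing constant `c_s` of the fractional Laplacian. -/
noncomputable def fracLapCoef (s : ℝ) : ℝ :=
  s * (4 : ℝ) ^ s * Real.Gamma (1 / 2 + s) / (Real.sqrt Real.pi * Real.Gamma (1 - s))

/-- `HasFracLapAt s u x L` means the principal value defining `(-Δ)^s u (x)`
exists and equals `L`. -/
def HasFracLapAt (s : ℝ) (u : ℝ → ℝ) (x L : ℝ) : Prop :=
  (∀ ε : ℝ, 0 < ε →
    MeasureTheory.IntegrableOn (fun y : ℝ => (u x - u y) / |x - y| ^ (1 + 2 * s))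
      {y : ℝ | ε < |y - x|}) ∧
  Filter.Tendsto (fun ε : ℝ =>
      fracLapCoef s * ∫ y in {y : ℝ | ε < |y - x|}, (u x - u y) / |x - y| ^ (1 + 2 * s))
    (nhdsWithin 0 (Set.Ioi 0)) (nhds L)

/-- `MemCalpha α Ω f` : `f ∈ C^α(Ω)`, i.e. `f` is continuously differentiable with bounded
derivatives up to order `⌊α⌋` on `Ω`, and its `⌊α⌋`-th derivative is Hölder continuous of
exponent `α - ⌊α⌋` on `Ω`. -/
def MemCalpha (α : ℝ) (Ω : Set ℝ) (f : ℝ → ℝ) : Prop :=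
  ContDiffOn ℝ (⌊α⌋₊ : ℕ) f Ω ∧
  (∀ k : ℕ, k ≤ ⌊α⌋₊ → ∃ C : ℝ, ∀ x ∈ Ω, |iteratedDerivWithin k f Ω x| ≤ C) ∧
  ∃ C : NNReal, HolderOnWith C (α - (⌊α⌋₊ : ℝ)).toNNReal (iteratedDerivWithin ⌊α⌋₊ f Ω) Ω

open Asymptotics Topology

lemma hasDerivAt_max_zero_rpow {c : ℝ} (hc : 1 < c) (x : ℝ) :
    HasDerivAt (fun y : ℝ => max y 0 ^ c) (c * max x 0 ^ (c - 1)) x := by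
  have hc0 : c ≠ 0 := by positivity
  have hc1 : c - 1 ≠ 0 := sub_ne_zero.2 hc.ne'
  rcases lt_trichotomy x 0 with hx | rfl | hx
  · have hev : (fun y : ℝ => max y 0 ^ c) =ᶠ[𝓝 x] fun _ => 0 := by
      filter_upwards [eventually_lt_nhds hx] with y hy
      rw [max_eq_right hy.le, Real.zero_rpow hc0]
    rw [max_eq_right hx.le, Real.zero_rpow hc1, mul_zero]
    exact (hasDerivAt_const x (0 : ℝ)).congr_of_eventuallyEq hev
  · have hleft : HasDerivWithinAt (fun y : ℝ => max y 0 ^ c) 0 (Iic 0) 0 :=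
      (hasDerivWithinAt_const _ _ 0).congr
        (fun y hy => by rw [max_eq_right hy, Real.zero_rpow hc0])
        (by rw [max_self, Real.zero_rpow hc0])
    have hright : HasDerivWithinAt (fun y : ℝ => max y 0 ^ c) 0 (Ici 0) 0 := by
      have h := (Real.hasDerivAt_rpow_const (x := 0) (Or.inr hc.le)).hasDerivWithinAt (s := Ici 0)
      rw [Real.zero_rpow hc1, mul_zero] at h
      exact h.congr (fun y hy => by rw [max_eq_left hy]) (by rw [max_self])
    rw [max_self, Real.zero_rpow hc1, mul_zero, ← hasDerivWithinAt_univ, ← Iic_union_Ici]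
    exact hleft.union hright
  · have hev : (fun y : ℝ => max y 0 ^ c) =ᶠ[𝓝 x] fun y => y ^ c := by
      filter_upwards [eventually_gt_nhds hx] with y hy
      rw [max_eq_left hy.le]
    rw [max_eq_left hx.le]
    exact (Real.hasDerivAt_rpow_const (Or.inl hx.ne')).congr_of_eventuallyEq hev

lemma abs_rpow_sub_rpow_le {a b p : ℝ} (ha : 0 ≤ a) (hb : 0 ≤ b) (hp : 0 ≤ p) (hp1 : p ≤ 1) :
    |a ^ p - b ^ p| ≤ |a - b| ^ p := by
  wlog hba : b ≤ a generalizing a b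
  · rw [abs_sub_comm, abs_sub_comm a]
    exact this hb ha (le_of_not_ge hba)
  have h := Real.rpow_add_le_add_rpow (sub_nonneg.2 hba) hb hp hp1
  rw [sub_add_cancel] at h
  rw [abs_of_nonneg (sub_nonneg.2 (Real.rpow_le_rpow hb hba hp)), abs_of_nonneg (sub_nonneg.2 hba)]
  linarith

lemma LipschitzWith.abs_rpow_sub_rpow_le {g : ℝ → ℝ} (hg : LipschitzWith 1 g) (hg0 : ∀ x, 0 ≤ g x)
    {p : ℝ} (hp : 0 ≤ p) (hp1 : p ≤ 1) (x y : ℝ) :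
    |g x ^ p - g y ^ p| ≤ |x - y| ^ p := by
  refine (_root_.abs_rpow_sub_rpow_le (hg0 x) (hg0 y) hp hp1).trans
    (Real.rpow_le_rpow (abs_nonneg _) ?_ hp)
  simpa [Real.dist_eq] using hg.dist_le_mul x y

lemma lipschitzWith_one_of_rightInverse {u v : ℝ → ℝ} (hu : ∀ x y, y ≤ x → x - y ≤ u x - u y)
    (hv : Function.RightInverse v u) : LipschitzWith 1 v := by
  have hexp : ∀ x y, |x - y| ≤ |u x - u y| := by
    intro x y
    rcases le_total y x with h | h
    · exact abs_le_abs_of_nonneg (sub_nonneg.2 h) (hu x y h)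
    · rw [abs_sub_comm, abs_sub_comm (u x)]
      exact abs_le_abs_of_nonneg (sub_nonneg.2 h) (hu y x h)
  refine LipschitzWith.of_dist_le_mul fun p q => ?_
  simpa [Real.dist_eq, hv p, hv q] using hexp (v p) (v q)

lemma not_isBigO_rpow_rpow_nhdsGT_zero {β γ : ℝ} (h : β < γ) :
    ¬ (fun x : ℝ => x ^ β) =O[𝓝[>] 0] fun x => x ^ γ := by
  intro hO
  refine not_isBoundedUnder_of_tendsto_atTop (tendsto_rpow_neg_nhdsGT_zero (sub_neg.2 h))
    ((div_isBoundedUnder_of_isBigO hO).mono_le ?_)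
  filter_upwards [self_mem_nhdsWithin] with x (hx : 0 < x)
  rw [Real.rpow_sub hx, Real.norm_eq_abs]
  exact le_abs_self _

lemma iteratedDerivWithin_two_eq_deriv_deriv {g : ℝ → ℝ} {s : Set ℝ} (hs : UniqueDiffOn ℝ s)
    (hg : Differentiable ℝ g) (hg' : Differentiable ℝ (deriv g)) {x : ℝ} (hx : x ∈ s) :
    iteratedDerivWithin 2 g s x = deriv (deriv g) x := by
  have h1 : ∀ y ∈ s, iteratedDerivWithin 1 g s y = deriv g y := fun y hy => by
    rw [iteratedDerivWithin_one, (hg y).derivWithin (hs y hy)]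
  rw [iteratedDerivWithin_succ, derivWithin_congr h1 (h1 x hx), (hg' x).derivWithin (hs x hx)]

lemma MemCalpha.isBigO_iteratedDerivWithin_sub {α : ℝ} {s : Set ℝ} {g : ℝ → ℝ} {k : ℕ} {x₀ : ℝ}
    (hg : MemCalpha α s g) (hs : UniqueDiffOn ℝ s) (hk : (k : ℝ) ≤ α) (hx₀ : x₀ ∈ s) :
    (fun x => iteratedDerivWithin k g s x - iteratedDerivWithin k g s x₀) =O[𝓝[s] x₀]
      fun x => |x - x₀| ^ min (α - k) 1 := by
  obtain ⟨hcd, -, C, hH⟩ := hg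
  rcases (Nat.le_floor hk).lt_or_eq with hlt | rfl
  · have hα : 1 ≤ α - k := by
      have := (Nat.le_floor_iff' (Nat.succ_ne_zero k)).1 hlt
      push_cast at this
      linarith
    rw [min_eq_right hα]
    simp only [Real.rpow_one, isBigO_abs_right]
    exact ((hcd.differentiableOn_iteratedDerivWithin (by exact_mod_cast hlt) hs) x₀ hx₀).isBigO_sub
  · have hα : α - ⌊α⌋₊ < 1 := by linarith [Nat.lt_floor_add_one α]
    rw [min_eq_left hα.le]
    refine IsBigO.of_bound C ?_
    filter_upwards [self_mem_nhdsWithin] with x hx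
    have h := hH.dist_le hx hx₀
    rw [Real.coe_toNNReal _ (sub_nonneg.2 hk), Real.dist_eq, Real.dist_eq] at h
    rwa [Real.norm_eq_abs, Real.norm_eq_abs, abs_of_nonneg (Real.rpow_nonneg (abs_nonneg _) _)]

section PositivePartPower

variable {β : ℝ}

lemma hasDerivAt_max_zero_rpow_add_id (hβ : 0 < β) (x : ℝ) :
    HasDerivAt (fun y : ℝ => max y 0 ^ (2 + β) + y) ((2 + β) * max x 0 ^ (1 + β) + 1) x := by
  have h := (hasDerivAt_max_zero_rpow (by linarith : (1 : ℝ) < 2 + β) x).add (hasDerivAt_id x)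
  rwa [show 2 + β - 1 = 1 + β by ring] at h

lemma hasDerivAt_deriv_max_zero_rpow_add_id (hβ : 0 < β) (x : ℝ) :
    HasDerivAt (deriv fun y : ℝ => max y 0 ^ (2 + β) + y)
      ((2 + β) * (1 + β) * max x 0 ^ β) x := by
  rw [funext fun y => (hasDerivAt_max_zero_rpow_add_id hβ y).deriv]
  have h :=
    ((hasDerivAt_max_zero_rpow (by linarith : (1 : ℝ) < 1 + β) x).const_mul (2 + β)).add_const 1
  rwa [show 1 + β - 1 = β by ring, ← mul_assoc] at h

lemma sub_le_max_zero_rpow_add_id_sub {c : ℝ} (hc : 0 ≤ c) {x y : ℝ} (h : y ≤ x) :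
    x - y ≤ (max x 0 ^ c + x) - (max y 0 ^ c + y) := by
  have := Real.rpow_le_rpow (le_max_right y 0) (max_le_max_right 0 h) hc
  linarith

lemma not_memCalpha_max_zero_rpow_add_id (hβ0 : 0 < β) (hβ1 : β < 1) {ε δ : ℝ} (hε : 0 < ε)
    (hδ : 0 < δ) : ¬ MemCalpha (2 + β + ε) (Icc (-δ) δ) fun y : ℝ => max y 0 ^ (2 + β) + y := by
  intro hmem
  have hs : UniqueDiffOn ℝ (Icc (-δ) δ) := uniqueDiffOn_Icc (by linarith)
  have h0 : (0 : ℝ) ∈ Icc (-δ) δ := ⟨by linarith, hδ.le⟩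
  have hO := hmem.isBigO_iteratedDerivWithin_sub hs (k := 2) (by push_cast; linarith) h0
  have hd2 : ∀ x ∈ Icc (-δ) δ, iteratedDerivWithin 2 (fun y : ℝ => max y 0 ^ (2 + β) + y)
      (Icc (-δ) δ) x = (2 + β) * (1 + β) * max x 0 ^ β := fun x hx => by
    rw [iteratedDerivWithin_two_eq_deriv_deriv hs
      (fun y => (hasDerivAt_max_zero_rpow_add_id hβ0 y).differentiableAt)
      (fun y => (hasDerivAt_deriv_max_zero_rpow_add_id hβ0 y).differentiableAt) hx,
      (hasDerivAt_deriv_max_zero_rpow_add_id hβ0 x).deriv]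
  have hle : 𝓝[>] (0 : ℝ) ≤ 𝓝[Icc (-δ) δ] 0 := by
    rw [← nhdsWithin_Ioo_eq_nhdsGT hδ]
    exact nhdsWithin_mono _ (Ioo_subset_Icc_self.trans (Icc_subset_Icc (by linarith) le_rfl))
  have hO' : (fun x : ℝ => (2 + β) * (1 + β) * x ^ β) =O[𝓝[>] 0] fun x => x ^ min (β + ε) 1 := by
    refine (hO.mono hle).congr' ?_ ?_
    · filter_upwards [hle self_mem_nhdsWithin, self_mem_nhdsWithin] with x hx (hx0 : 0 < x)
      rw [hd2 x hx, hd2 0 h0, max_eq_left hx0.le, max_self, Real.zero_rpow hβ0.ne', mul_zero,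
        sub_zero]
    · filter_upwards [self_mem_nhdsWithin] with x (hx0 : 0 < x)
      rw [sub_zero, abs_of_pos hx0, Nat.cast_ofNat, show 2 + β + ε - 2 = β + ε by ring]
  exact not_isBigO_rpow_rpow_nhdsGT_zero (lt_min (by linarith) hβ1)
    ((isBigO_const_mul_left_iff (by positivity)).1 hO')

end PositivePartPower

theorem stmt16 (β : ℝ) (hβ0 : 0 < β) (hβ1 : β < 1)
    (u v f : ℝ → ℝ)
    (hu1 : ∀ x : ℝ, 0 ≤ x → u x = x ^ (2 + β) + x)
    (hu2 : ∀ x : ℝ, x < 0 → u x = x)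
    (hv1 : Function.LeftInverse v u) (hv2 : Function.RightInverse v u)
    (hf1 : ∀ t : ℝ, 0 ≤ t → f t = (2 + β) * (1 + β) * v t ^ β)
    (hf2 : ∀ t : ℝ, t < 0 → f t = 0) :
    ((∀ x : ℝ, DifferentiableAt ℝ u x) ∧ (∀ x : ℝ, DifferentiableAt ℝ (deriv u) x) ∧
      ∀ x : ℝ, deriv (deriv u) x = f (u x)) ∧
    (∀ M : ℝ, 0 < M → ∀ p ∈ Set.Icc (-M) M, ∀ q ∈ Set.Icc (-M) M,
      |f p - f q| ≤ (2 + β) * (1 + β) * |p - q| ^ β) ∧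
    (∀ ε δ : ℝ, 0 < ε → 0 < δ → ¬ MemCalpha (2 + β + ε) (Set.Icc (-δ) δ) u) := by
  have hv_nonneg : ∀ t, 0 ≤ t → 0 ≤ v t := fun t ht => by
    by_contra! h
    linarith [hv2 t, hu2 _ h]
  have hu : u = fun x => max x 0 ^ (2 + β) + x := funext fun x => by
    rcases le_or_gt 0 x with hx | hx
    · rw [hu1 x hx, max_eq_left hx]
    · rw [hu2 x hx, max_eq_right hx.le, Real.zero_rpow (by linarith), zero_add]
  have hv0 : v 0 = 0 := by
    simpa [hu, Real.zero_rpow (by linarith : 2 + β ≠ 0)] using hv1 0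
  have hf : ∀ t, f t = (2 + β) * (1 + β) * v (max t 0) ^ β := fun t => by
    rcases le_or_gt 0 t with ht | ht
    · rw [hf1 t ht, max_eq_left ht]
    · rw [hf2 t ht, max_eq_right ht.le, hv0, Real.zero_rpow hβ0.ne', mul_zero]
  have hd2 : ∀ x, HasDerivAt (deriv u) ((2 + β) * (1 + β) * max x 0 ^ β) x := fun x => by
    rw [hu]
    exact hasDerivAt_deriv_max_zero_rpow_add_id hβ0 x
  refine ⟨⟨fun x => ?_, fun x => (hd2 x).differentiableAt, fun x => ?_⟩,
    fun M _ p _ q _ => ?_, fun ε δ hε hδ => ?_⟩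
  · rw [hu]
    exact (hasDerivAt_max_zero_rpow_add_id hβ0 x).differentiableAt
  · rw [(hd2 x).deriv, hf]
    rcases le_or_gt 0 x with hx | hx
    · rw [max_eq_left hx, hu1 x hx, max_eq_left (by positivity), ← hu1 x hx, hv1 x]
    · rw [max_eq_right hx.le, hu2 x hx, max_eq_right hx.le, hv0]
  · have hvLip : LipschitzWith 1 v := lipschitzWith_one_of_rightInverse (fun x y hxy => by
      rw [hu]
      exact sub_le_max_zero_rpow_add_id_sub (by positivity) hxy) hv2
    have hLip : LipschitzWith 1 fun t => v (max t 0) := by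
      simpa [Function.comp_def] using hvLip.comp (LipschitzWith.id.max_const 0)
    rw [hf, hf, ← mul_sub, abs_mul, abs_of_pos (by positivity)]
    gcongr
    exact hLip.abs_rpow_sub_rpow_le (fun t => hv_nonneg _ (le_max_right t 0)) hβ0.le hβ1.le p q
  · rw [hu]
    exact not_memCalpha_max_zero_rpow_add_id hβ0 hβ1 hε hδ
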